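/- arXiv:2105.09181 — 6 statements merged into one kernel-verified Lean document; each statement's English description precedes it below -/
import Mathlib

section
/- Let d ≥ 1, let A ⊂ ℤ^d be a finite set whose convex hull H(A) is a d-simplex with |A| = d+1 or |A| = d+2, and fix a_0 ∈ A. Then for every integer N ≥ 1 the structure equation (∗) holds: NA = (N·H(A) ∩ (N·a_0 + Λ_{A−A})) ∖ ⋃_{a ∈ ex(H(A))} (N·a − E(a−A)). -/
open Pointwise MeasureTheory

noncomputable section

/-- Embedding of integer vectors into real vectors. -/
def emb (d : ℕ) : (Fin d → ℤ) → (Fin d → ℝ) := fun x i => (x i : ℝ)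

/-- The `N`-fold sumset `NA` (with `0·A = {0}`). -/
def nfold (d : ℕ) (A : Set (Fin d → ℤ)) (N : ℕ) : Set (Fin d → ℤ) :=
  {x | ∃ f : Fin N → (Fin d → ℤ), (∀ i, f i ∈ A) ∧ x = ∑ i, f i}

/-- `P(A) = ⋃_{N ≥ 1} NA`. -/
def PA (d : ℕ) (A : Set (Fin d → ℤ)) : Set (Fin d → ℤ) :=
  ⋃ N ∈ Set.Ici 1, nfold d A N

/-- The width `w(A) = max_{a₁,a₂ ∈ A} ‖a₁ - a₂‖_∞`. -/
def width (d : ℕ) (A : Finset (Fin d → ℤ)) : ℕ :=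
  (A ×ˢ A).sup fun p => Finset.univ.sup fun i => (p.1 i - p.2 i).natAbs

/-- The convex hull `H(A)` in `ℝ^d`. -/
def hull (d : ℕ) (A : Finset (Fin d → ℤ)) : Set (Fin d → ℝ) :=
  convexHull ℝ (emb d '' ↑A)

/-- The cone `C_B = {∑_{b ∈ B} c_b b : c_b ≥ 0}` generated by `B`. -/
def cone (d : ℕ) (B : Finset (Fin d → ℤ)) : Set (Fin d → ℝ) :=
  {x | ∃ c : (Fin d → ℤ) → ℝ, (∀ a, 0 ≤ c a) ∧ x = ∑ a ∈ B, c a • emb d a}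

/-- The lattice (subgroup of `ℤ^d`) generated by a set `S`. -/
def latt (d : ℕ) (S : Set (Fin d → ℤ)) : AddSubgroup (Fin d → ℤ) :=
  AddSubgroup.closure S

/-- The exceptional set `E(A) = (C_A ∩ Λ_A) ∖ P(A)`, viewed inside `ℤ^d`. -/
def excep (d : ℕ) (A : Finset (Fin d → ℤ)) : Set (Fin d → ℤ) :=
  {x | emb d x ∈ cone d A ∧ x ∈ latt d ↑A ∧ x ∉ PA d ↑A}

/-- The set of (lattice) extreme points of `H(A)`: those `p` with `emb p ∈ H(A)` such that
some `v ∈ span ℝ (A - A)`, `v ≠ 0`, satisfies `⟨v,x⟩ > ⟨v,p⟩` for all `x ∈ H(A) ∖ {p}`. -/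
def exP (d : ℕ) (A : Finset (Fin d → ℤ)) : Set (Fin d → ℤ) :=
  {p | emb d p ∈ hull d A ∧
    ∃ v ∈ Submodule.span ℝ (emb d '' ((A : Set (Fin d → ℤ)) - (A : Set (Fin d → ℤ)))),
      v ≠ (0 : Fin d → ℝ) ∧
      ∀ x ∈ hull d A, x ≠ emb d p → (∑ i, v i * emb d p i) < ∑ i, v i * x i}

/-- The structure equation
`NA = (N·H(A) ∩ (N·a₀ + Λ_{A-A})) ∖ ⋃_{a ∈ ex(H(A))} (N·a - E(a - A))`. -/
def structEq (d : ℕ) (A : Finset (Fin d → ℤ)) (a0 : Fin d → ℤ) (N : ℕ) : Prop :=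
  emb d '' nfold d ↑A N =
    ((N : ℝ) • hull d A ∩
      emb d '' (({N • a0} : Set (Fin d → ℤ)) +
        (latt d ((A : Set (Fin d → ℤ)) - (A : Set (Fin d → ℤ))) : Set (Fin d → ℤ)))) \
    ⋃ a ∈ exP d A,
      emb d '' (({N • a} : Set (Fin d → ℤ)) - excep d (A.image fun y => a - y))

/-- `H(A)` is a `d`-simplex: there is `B ⊆ A` with `|B| = d+1`, `B - B` spanning `ℝ^d`,
and `H(A) = H(B)`. -/
def IsSimplex (d : ℕ) (A : Finset (Fin d → ℤ)) : Prop :=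
  ∃ B ⊆ A, B.card = d + 1 ∧
    Submodule.span ℝ (emb d '' ((B : Set (Fin d → ℤ)) - (B : Set (Fin d → ℤ)))) = ⊤ ∧
    hull d B = hull d A

/-- `N_A(v)`: the minimal positive `N` with `v ∈ NA`, and `N_A(0) = 0`. -/
def NAfn (d : ℕ) (A : Set (Fin d → ℤ)) (v : Fin d → ℤ) : ℕ :=
  if v = 0 then 0 else sInf {N : ℕ | 0 < N ∧ v ∈ nfold d A N}

/-- The set `S(A,B)` of `B`-minimal elements. -/
def Smin (d : ℕ) (A B : Set (Fin d → ℤ)) : Set (Fin d → ℤ) :=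
  {0} ∪ {u | u ∈ PA d A ∧ u ≠ 0 ∧
    ∀ f : Fin (NAfn d A u) → (Fin d → ℤ), (∀ i, f i ∈ A) → u = ∑ i, f i →
      ∀ i, f i ∉ B ∪ ({0} : Set (Fin d → ℤ))}

/-!
The inclusion `⊆` is direct: if `x = a₁ + ⋯ + a_N` with `aᵢ ∈ A`, then
`N a - x = ∑ (a - aᵢ) ∈ P(a - A)` for every `a`.

For `⊇`, let `B ⊆ A` be the vertex set of the simplex. Affine independence of `B` makes integer
representations `x = ∑ c_y y` with `∑ c_y = N` rigid. If `A = B`, the coefficients are the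
barycentric weights of `x ∈ N·H(A)`, hence nonnegative. If `A = B ∪ {a}` and `θ` are the
barycentric coordinates of `a`, two representations `c, r` satisfy `c_y - r_y = (r_a - c_a) θ_y`
on `B`. Every vertex `k` is extreme and `N k - x` lies in the cone and the lattice of `k - A`,
so `x ∉ N k - E(k - A)` forces `N k - x ∈ P(k - A)`, i.e. a representation that is nonnegative
off `k`. A representation minimising the coefficient `c_a ≥ 0` is then nonnegative at each
`y ∈ B`, by comparison with one that is nonnegative off a vertex `k ≠ y`.
-/

theorem AffineBasis.coord_lt_one_of_mem_convexHull {ι E : Type*} [Fintype ι] [AddCommGroup E]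
    [Module ℝ E] (b : AffineBasis ι ℝ E) {i : ι} {x : E} (hx : x ∈ convexHull ℝ (Set.range b))
    (hne : x ≠ b i) : b.coord i x < 1 := by
  classical
  rw [b.convexHull_eq_nonneg_coord] at hx
  have hsum := b.sum_coord_apply_eq_one x
  refine lt_of_le_of_ne (hsum ▸ Finset.single_le_sum (fun j _ => hx j) (Finset.mem_univ i))
    fun h => ?_
  rw [← Finset.add_sum_erase _ _ (Finset.mem_univ i), h, add_eq_left,
    Finset.sum_eq_zero_iff_of_nonneg fun j _ => hx j] at hsum
  refine hne (b.ext_elem fun j => ?_)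
  rw [b.coord_apply]
  split_ifs with hij
  · rwa [hij]
  · exact hsum j (Finset.mem_erase.2 ⟨hij, Finset.mem_univ j⟩)

theorem AffineBasis.exists_exposing_linearMap {ι E : Type*} [Fintype ι] [Nontrivial ι]
    [AddCommGroup E] [Module ℝ E] (b : AffineBasis ι ℝ E) (i : ι) :
    ∃ f : E →ₗ[ℝ] ℝ, f ≠ 0 ∧ ∀ x ∈ convexHull ℝ (Set.range b), x ≠ b i → f (b i) < f x := by
  have hf : ∀ x, (-(b.coord i).linear) x - (-(b.coord i).linear) (b i) = 1 - b.coord i x := by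
    intro x
    rw [LinearMap.neg_apply, LinearMap.neg_apply, ← neg_sub', ← map_sub, ← vsub_eq_sub,
      AffineMap.linearMap_vsub, b.coord_apply_eq, vsub_eq_sub, neg_sub]
  refine ⟨-(b.coord i).linear, fun h0 => ?_, fun x hx hne => ?_⟩
  · obtain ⟨j, hj⟩ := exists_ne i
    have h := hf (b j)
    rw [h0, LinearMap.zero_apply, LinearMap.zero_apply, sub_self, b.coord_apply_ne hj.symm,
      sub_zero] at h
    exact zero_ne_one h
  · linarith [hf x, b.coord_lt_one_of_mem_convexHull hx hne]

theorem AffineIndependent.eq_of_sum_eq_sum_coe {α k V : Type*} [Ring k] [AddCommGroup V]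
    [Module k V] {s : Finset α} {p : α → V} (hp : AffineIndependent k fun i : s => p i)
    {w₁ w₂ : α → k} (hw : ∑ i ∈ s, w₁ i = ∑ i ∈ s, w₂ i)
    (hwp : ∑ i ∈ s, w₁ i • p i = ∑ i ∈ s, w₂ i • p i) : ∀ i ∈ s, w₁ i = w₂ i :=
  fun i hi => hp.eq_of_sum_eq_sum (s := Finset.univ) (w₁ := fun j : s => w₁ j)
    (w₂ := fun j : s => w₂ j)
    (by rwa [Finset.sum_coe_sort s w₁, Finset.sum_coe_sort s w₂])
    (by rwa [Finset.sum_coe_sort s fun i => w₁ i • p i, Finset.sum_coe_sort s fun i => w₂ i • p i])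
    ⟨i, hi⟩ (Finset.mem_univ _)

namespace StructureSimplex

open Finset

variable {d : ℕ}

def embAddHom (d : ℕ) : (Fin d → ℤ) →+ (Fin d → ℝ) := (Int.castAddHom ℝ).compLeft (Fin d)

theorem coe_embAddHom : ⇑(embAddHom d) = emb d := rfl

theorem emb_injective : Function.Injective (emb d) :=
  fun _ _ h => funext fun i => by simpa [emb] using congrFun h i

theorem emb_sub (x y : Fin d → ℤ) : emb d (x - y) = emb d x - emb d y :=
  map_sub (embAddHom d) x y

theorem emb_zsmul (n : ℤ) (x : Fin d → ℤ) : emb d (n • x) = (n : ℝ) • emb d x := by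
  funext i; simp [emb]

theorem emb_nsmul (n : ℕ) (x : Fin d → ℤ) : emb d (n • x) = (n : ℝ) • emb d x := by
  funext i; simp [emb]

theorem emb_sum {ι : Type*} (s : Finset ι) (f : ι → Fin d → ℤ) :
    emb d (∑ i ∈ s, f i) = ∑ i ∈ s, emb d (f i) :=
  map_sum (embAddHom d) f s

theorem zero_mem_nfold (A : Set (Fin d → ℤ)) : 0 ∈ nfold d A 0 :=
  ⟨Fin.elim0, fun i => i.elim0, rfl⟩

theorem nsmul_mem_nfold {A : Set (Fin d → ℤ)} {a : Fin d → ℤ} (ha : a ∈ A) (n : ℕ) :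
    n • a ∈ nfold d A n :=
  ⟨fun _ => a, fun _ => ha, by simp⟩

theorem add_mem_nfold {A : Set (Fin d → ℤ)} {x y : Fin d → ℤ} {M N : ℕ}
    (hx : x ∈ nfold d A M) (hy : y ∈ nfold d A N) : x + y ∈ nfold d A (M + N) := by
  obtain ⟨f, hf, rfl⟩ := hx
  obtain ⟨g, hg, rfl⟩ := hy
  exact ⟨Fin.append f g, Fin.addCases (by simpa using hf) (by simpa using hg),
    by rw [Fin.sum_univ_add]; simp⟩

theorem sum_nsmul_mem_nfold {A : Set (Fin d → ℤ)} {s : Finset (Fin d → ℤ)} (hs : ↑s ⊆ A)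
    (c : (Fin d → ℤ) → ℕ) : ∑ y ∈ s, c y • y ∈ nfold d A (∑ y ∈ s, c y) := by
  classical
  induction s using Finset.induction_on with
  | empty => exact zero_mem_nfold A
  | insert a s ha ih =>
    rw [coe_insert, Set.insert_subset_iff] at hs
    rw [sum_insert ha, sum_insert ha]
    exact add_mem_nfold (nsmul_mem_nfold hs.1 _) (ih hs.2)

def IsRepr {G : Type*} [AddCommGroup G] (A : Finset G) (N : ℤ) (x : G) (c : G → ℤ) : Prop :=
  ∑ y ∈ A, c y = N ∧ ∑ y ∈ A, c y • y = x

section IsRepr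

variable {G : Type*} [AddCommGroup G] {A : Finset G} {M N : ℤ} {x x' : G} {c c' : G → ℤ}

theorem IsRepr.add (h : IsRepr A M x c) (h' : IsRepr A N x' c') :
    IsRepr A (M + N) (x + x') (c + c') :=
  ⟨by simp [sum_add_distrib, h.1, h'.1], by simp [add_smul, sum_add_distrib, h.2, h'.2]⟩

theorem IsRepr.sub (h : IsRepr A M x c) (h' : IsRepr A N x' c') :
    IsRepr A (M - N) (x - x') (c - c') :=
  ⟨by simp [sum_sub_distrib, h.1, h'.1], by simp [sub_smul, sum_sub_distrib, h.2, h'.2]⟩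

theorem IsRepr.neg (h : IsRepr A N x c) : IsRepr A (-N) (-x) (-c) :=
  ⟨by simp [h.1], by simp [neg_smul, h.2]⟩

theorem isRepr_single [DecidableEq G] {a : G} (ha : a ∈ A) (n : ℤ) :
    IsRepr A n (n • a) (Pi.single a n) := by
  refine ⟨by simp [ha], ?_⟩
  rw [sum_eq_single_of_mem a ha fun y _ hy => by simp [hy]]
  simp

theorem IsRepr.sum_smul_sub (h : IsRepr A N x c) (a : G) :
    ∑ y ∈ A, c y • (a - y) = N • a - x := by
  simp [smul_sub, sum_sub_distrib, ← sum_smul, h.1, h.2]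

end IsRepr

theorem mem_nfold_of_isRepr {A : Finset (Fin d → ℤ)} {N : ℕ} {x : Fin d → ℤ}
    {c : (Fin d → ℤ) → ℤ} (h : IsRepr A N x c) (hc : ∀ y ∈ A, 0 ≤ c y) :
    x ∈ nfold d ↑A N := by
  have hcast : ∀ y ∈ A, ((c y).toNat : ℤ) = c y := fun y hy => Int.toNat_of_nonneg (hc y hy)
  have hN : ∑ y ∈ A, (c y).toNat = N := by
    have : ((∑ y ∈ A, (c y).toNat : ℕ) : ℤ) = N := by push_cast; rw [sum_congr rfl hcast, h.1]
    exact_mod_cast this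
  have hx : ∑ y ∈ A, (c y).toNat • y = x := by
    rw [← h.2]
    exact sum_congr rfl fun y hy => by rw [← natCast_zsmul, hcast y hy]
  rw [← hN, ← hx]
  exact sum_nsmul_mem_nfold subset_rfl _

theorem exists_isRepr_of_mem_nfold {A : Finset (Fin d → ℤ)} {N : ℕ} {x : Fin d → ℤ}
    (hx : x ∈ nfold d ↑A N) : ∃ c, IsRepr A N x c ∧ ∀ y, 0 ≤ c y := by
  classical
  obtain ⟨f, hf, rfl⟩ := hx
  refine ⟨fun y => #{i | f i = y}, ⟨?_, ?_⟩, fun y => by positivity⟩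
  · have := card_eq_sum_card_fiberwise (s := univ) (t := A) fun i _ => hf i
    simp only [card_univ, Fintype.card_fin] at this
    beta_reduce
    exact_mod_cast this.symm
  · rw [← sum_fiberwise_of_maps_to (fun i _ => hf i) f]
    refine sum_congr rfl fun y _ => ?_
    rw [sum_congr rfl fun i hi => (mem_filter.mp hi).2]
    simp

theorem sum_zsmul_mem_latt {ι : Type*} {S : Set (Fin d → ℤ)} {s : Finset ι} {f : ι → Fin d → ℤ}
    (hf : ∀ i ∈ s, f i ∈ S) (c : ι → ℤ) : ∑ i ∈ s, c i • f i ∈ latt d S :=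
  AddSubgroup.sum_mem _ fun i hi => AddSubgroup.zsmul_mem _ (AddSubgroup.subset_closure (hf i hi)) _

theorem exists_isRepr_of_mem_latt {A : Finset (Fin d → ℤ)} {z : Fin d → ℤ}
    (hz : z ∈ latt d (↑A - ↑A)) : ∃ c, IsRepr A 0 z c := by
  classical
  induction hz using AddSubgroup.closure_induction with
  | mem _ h =>
    obtain ⟨y, hy, y', hy', rfl⟩ := h
    have h := (isRepr_single hy 1).sub (isRepr_single hy' 1)
    rw [sub_self, one_smul, one_smul] at h
    exact ⟨_, h⟩
  | zero => exact ⟨0, by simp [IsRepr]⟩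
  | add _ _ _ _ h h' =>
    obtain ⟨c, hc⟩ := h
    obtain ⟨c', hc'⟩ := h'
    exact ⟨_, by simpa using hc.add hc'⟩
  | neg _ _ h =>
    obtain ⟨c, hc⟩ := h
    exact ⟨_, by simpa using hc.neg⟩

theorem exists_isRepr_of_mem_coset {A : Finset (Fin d → ℤ)} {a0 x : Fin d → ℤ} (ha0 : a0 ∈ A)
    {N : ℕ} (hx : x ∈ ({N • a0} : Set (Fin d → ℤ)) + latt d (↑A - ↑A)) :
    ∃ c, IsRepr A N x c := by
  classical
  obtain ⟨_, rfl, z, hz, rfl⟩ := hx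
  obtain ⟨c, hc⟩ := exists_isRepr_of_mem_latt hz
  have h := (isRepr_single ha0 N).add hc
  rw [add_zero, natCast_zsmul] at h
  exact ⟨_, h⟩

theorem mem_coset_of_isRepr {A : Finset (Fin d → ℤ)} {a0 x : Fin d → ℤ} (ha0 : a0 ∈ A)
    {N : ℕ} {c : (Fin d → ℤ) → ℤ} (h : IsRepr A N x c) :
    x ∈ ({N • a0} : Set (Fin d → ℤ)) + latt d (↑A - ↑A) := by
  have hmem : N • a0 - x ∈ latt d (↑A - ↑A) := by
    rw [← natCast_zsmul, ← h.sum_smul_sub]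
    exact sum_zsmul_mem_latt (fun y hy => Set.sub_mem_sub ha0 hy) c
  exact ⟨N • a0, rfl, x - N • a0, by simpa using neg_mem hmem, add_sub_cancel _ _⟩

theorem mem_hull_iff {A : Finset (Fin d → ℤ)} {ξ : Fin d → ℝ} :
    ξ ∈ hull d A ↔ ∃ w : (Fin d → ℤ) → ℝ,
      (∀ y ∈ A, 0 ≤ w y) ∧ ∑ y ∈ A, w y = 1 ∧ ∑ y ∈ A, w y • emb d y = ξ := by
  constructor
  · rw [hull, ← coe_image, mem_convexHull']
    rintro ⟨w, h0, h1, hξ⟩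
    rw [sum_image emb_injective.injOn] at h1 hξ
    exact ⟨w ∘ emb d, fun y hy => h0 _ (mem_image_of_mem _ hy), h1, hξ⟩
  · rintro ⟨w, h0, h1, hξ⟩
    exact mem_convexHull_of_exists_fintype (fun y : A => w y) (fun y => emb d y)
      (fun y => h0 y y.2) (by rwa [sum_coe_sort]) (fun y => ⟨y, y.2, rfl⟩)
      (by rwa [sum_coe_sort A fun y => w y • emb d y])

theorem mem_smul_hull_iff {A : Finset (Fin d → ℤ)} {t : ℝ} (ht : 0 < t) {ξ : Fin d → ℝ} :
    ξ ∈ t • hull d A ↔ ∃ w : (Fin d → ℤ) → ℝ,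
      (∀ y ∈ A, 0 ≤ w y) ∧ ∑ y ∈ A, w y = t ∧ ∑ y ∈ A, w y • emb d y = ξ := by
  rw [Set.mem_smul_set_iff_inv_smul_mem₀ ht.ne', mem_hull_iff]
  constructor
  · rintro ⟨w, h0, h1, hξ⟩
    refine ⟨fun y => t * w y, fun y hy => mul_nonneg ht.le (h0 y hy), ?_, ?_⟩
    · rw [← mul_sum, h1, mul_one]
    · simp_rw [mul_smul, ← smul_sum, hξ, smul_inv_smul₀ ht.ne']
  · rintro ⟨w, h0, h1, hξ⟩
    refine ⟨fun y => t⁻¹ * w y, fun y hy => mul_nonneg (inv_nonneg.2 ht.le) (h0 y hy), ?_, ?_⟩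
    · rw [← mul_sum, h1, inv_mul_cancel₀ ht.ne']
    · simp_rw [mul_smul, ← smul_sum, hξ]

theorem range_emb_subtype (B : Finset (Fin d → ℤ)) :
    Set.range (fun y : B => emb d y) = emb d '' ↑B := by
  ext; simp

theorem vectorSpan_image_emb (B : Finset (Fin d → ℤ)) :
    vectorSpan ℝ (emb d '' ↑B) = Submodule.span ℝ (emb d '' (↑B - ↑B)) := by
  rw [vectorSpan_def, ← coe_embAddHom, Set.image_sub]
  rfl

theorem affineIndependent_emb {B : Finset (Fin d → ℤ)} (hcard : #B = d + 1)
    (hspan : Submodule.span ℝ (emb d '' (↑B - ↑B)) = ⊤) :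
    AffineIndependent ℝ (fun y : B => emb d y) := by
  rw [affineIndependent_iff_le_finrank_vectorSpan ℝ _ (n := d) (by simpa using hcard),
    range_emb_subtype, vectorSpan_image_emb, hspan, finrank_top, Module.finrank_fin_fun]

def simplexBasis {B : Finset (Fin d → ℤ)} (hcard : #B = d + 1)
    (hspan : Submodule.span ℝ (emb d '' (↑B - ↑B)) = ⊤) : AffineBasis B ℝ (Fin d → ℝ) :=
  ⟨fun y => emb d y, affineIndependent_emb hcard hspan, by
    rw [range_emb_subtype, AffineSubspace.affineSpan_eq_top_iff_vectorSpan_eq_top_of_nonempty,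
      vectorSpan_image_emb, hspan]
    exact (coe_nonempty.2 (card_pos.1 (by omega : 0 < #B))).image _⟩

theorem range_simplexBasis {B : Finset (Fin d → ℤ)} (hcard : #B = d + 1)
    (hspan : Submodule.span ℝ (emb d '' (↑B - ↑B)) = ⊤) :
    Set.range (simplexBasis hcard hspan) = emb d '' ↑B :=
  range_emb_subtype B

theorem mem_exP_of_mem_vertices (hd : 1 ≤ d) {A B : Finset (Fin d → ℤ)} (hBA : B ⊆ A)
    (hcard : #B = d + 1) (hspan : Submodule.span ℝ (emb d '' (↑B - ↑B)) = ⊤)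
    (hhull : hull d B = hull d A) {k : Fin d → ℤ} (hk : k ∈ B) : k ∈ exP d A := by
  classical
  have : Nontrivial B := (one_lt_card_iff_nontrivial.1 (by omega)).coe_sort
  obtain ⟨f, hf0, hf⟩ := (simplexBasis hcard hspan).exists_exposing_linearMap ⟨k, hk⟩
  have hdot : ∀ x, ∑ j, f (fun i => if j = i then 1 else 0) * x j = f x := fun x => by
    simp_rw [f.pi_apply_eq_sum_univ x, mul_comm, smul_eq_mul]
  have hspanA : Submodule.span ℝ (emb d '' (↑A - ↑A)) = ⊤ :=
    top_unique (hspan ▸ Submodule.span_mono (Set.image_mono (Set.sub_subset_sub hBA hBA)))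
  refine ⟨hhull ▸ subset_convexHull ℝ _ ⟨k, hk, rfl⟩, fun j => f fun i => if j = i then 1 else 0,
    hspanA ▸ Submodule.mem_top,
    fun h0 => hf0 (LinearMap.ext fun x => ?_), fun x hx hne => ?_⟩
  · have hv (j : Fin d) : (f fun i => if j = i then 1 else 0) = 0 := congrFun h0 j
    simp [← hdot x, hv]
  · rw [← hhull] at hx
    simp_rw [hdot]
    exact hf x (by rwa [range_simplexBasis]) hne

theorem IsRepr.map_emb {A : Finset (Fin d → ℤ)} {N : ℤ} {x : Fin d → ℤ} {c : (Fin d → ℤ) → ℤ}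
    (h : IsRepr A N x c) :
    ∑ y ∈ A, (c y : ℝ) = N ∧ ∑ y ∈ A, (c y : ℝ) • emb d y = emb d x :=
  ⟨by exact_mod_cast h.1, by simp_rw [← h.2, emb_sum, emb_zsmul]⟩

theorem mem_nfold_of_affineIndependent {A : Finset (Fin d → ℤ)}
    (hA : AffineIndependent ℝ fun y : A => emb d y) {N : ℕ} (hN : 1 ≤ N) {x : Fin d → ℤ}
    (hx : emb d x ∈ (N : ℝ) • hull d A) {c : (Fin d → ℤ) → ℤ} (hc : IsRepr A N x c) :
    x ∈ nfold d ↑A N := by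
  obtain ⟨w, hw0, hw1, hwx⟩ := (mem_smul_hull_iff (by positivity)).1 hx
  have hcw := hA.eq_of_sum_eq_sum_coe (w₂ := w) (by rw [hc.map_emb.1, hw1]; norm_cast)
    (hc.map_emb.2.trans hwx.symm)
  exact mem_nfold_of_isRepr hc fun y hy => by exact_mod_cast (hcw y hy).symm ▸ hw0 y hy

section Insert

variable {B : Finset (Fin d → ℤ)} {a : Fin d → ℤ} {θ : (Fin d → ℤ) → ℝ} {N : ℤ}
  {x : Fin d → ℤ}

theorem IsRepr.weights_insert (ha : a ∉ B) (hθ1 : ∑ y ∈ B, θ y = 1)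
    (hθ : ∑ y ∈ B, θ y • emb d y = emb d a) {c : (Fin d → ℤ) → ℤ}
    (h : IsRepr (insert a B) N x c) :
    ∑ y ∈ B, ((c y : ℝ) + c a * θ y) = N ∧
      ∑ y ∈ B, ((c y : ℝ) + c a * θ y) • emb d y = emb d x := by
  obtain ⟨h1, h2⟩ := h.map_emb
  rw [sum_insert ha] at h1 h2
  refine ⟨by rw [sum_add_distrib, ← mul_sum, hθ1, ← h1]; ring, ?_⟩
  simp_rw [add_smul, sum_add_distrib, mul_smul, ← smul_sum, hθ, ← h2]
  abel

theorem IsRepr.sub_eq_of_insert (hB : AffineIndependent ℝ fun y : B => emb d y) (ha : a ∉ B)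
    (hθ1 : ∑ y ∈ B, θ y = 1) (hθ : ∑ y ∈ B, θ y • emb d y = emb d a)
    {c r : (Fin d → ℤ) → ℤ} (hc : IsRepr (insert a B) N x c) (hr : IsRepr (insert a B) N x r) :
    ∀ y ∈ B, (c y : ℝ) - r y = (r a - c a) * θ y := by
  obtain ⟨hc1, hc2⟩ := hc.weights_insert ha hθ1 hθ
  obtain ⟨hr1, hr2⟩ := hr.weights_insert ha hθ1 hθ
  intro y hy
  linarith [hB.eq_of_sum_eq_sum_coe (hc1.trans hr1.symm) (hc2.trans hr2.symm) y hy]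

theorem exists_nonneg_isRepr_insert (hB : AffineIndependent ℝ fun y : B => emb d y)
    (hB2 : 1 < #B) (ha : a ∉ B) (hθ0 : ∀ y ∈ B, 0 ≤ θ y) (hθ1 : ∑ y ∈ B, θ y = 1)
    (hθ : ∑ y ∈ B, θ y • emb d y = emb d a)
    (hvert : ∀ k ∈ B, ∃ r, IsRepr (insert a B) N x r ∧ ∀ y ∈ insert a B, y ≠ k → 0 ≤ r y) :
    ∃ c, IsRepr (insert a B) N x c ∧ ∀ y ∈ insert a B, 0 ≤ c y := by
  classical
  have hra : ∀ k ∈ B, ∀ r : (Fin d → ℤ) → ℤ, (∀ y ∈ insert a B, y ≠ k → 0 ≤ r y) → 0 ≤ r a :=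
    fun k hk r hr => hr a (mem_insert_self a B) fun h => ha (h ▸ hk)
  have hex : ∃ n : ℕ, ∃ c, IsRepr (insert a B) N x c ∧ c a = n := by
    obtain ⟨k, hk⟩ := card_pos.1 (by omega : 0 < #B)
    obtain ⟨r, hr, hr0⟩ := hvert k hk
    exact ⟨(r a).toNat, r, hr, (Int.toNat_of_nonneg (hra k hk r hr0)).symm⟩
  obtain ⟨c, hc, hca⟩ := Nat.find_spec hex
  refine ⟨c, hc, fun y hy => ?_⟩
  obtain rfl | hyB := mem_insert.1 hy
  · exact hca ▸ Int.natCast_nonneg _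
  obtain ⟨k, hk, hky⟩ := (one_lt_card_iff_nontrivial.1 hB2).exists_ne y
  obtain ⟨r, hr, hr0⟩ := hvert k hk
  have hmin : c a ≤ r a := by
    rw [hca, ← Int.toNat_of_nonneg (hra k hk r hr0)]
    exact_mod_cast Nat.find_min' hex ⟨r, hr, (Int.toNat_of_nonneg (hra k hk r hr0)).symm⟩
  have hry : (0 : ℝ) ≤ r y := by exact_mod_cast hr0 y hy hky.symm
  have hdiff : (0 : ℝ) ≤ (r a - c a) * θ y :=
    mul_nonneg (by exact_mod_cast sub_nonneg.2 hmin) (hθ0 y hyB)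
  have := hc.sub_eq_of_insert hB ha hθ1 hθ hr y hyB
  exact_mod_cast (by linarith : (0 : ℝ) ≤ c y)

end Insert

theorem exists_isRepr_of_mem_PA {A : Finset (Fin d → ℤ)} {k x : Fin d → ℤ} (hk : k ∈ A) {N : ℕ}
    (h : N • k - x ∈ PA d ↑(A.image (k - ·))) :
    ∃ r, IsRepr A N x r ∧ ∀ y ∈ A, y ≠ k → 0 ≤ r y := by
  classical
  obtain ⟨M, -, hM⟩ := Set.mem_iUnion₂.1 h
  obtain ⟨c, ⟨hc1, hc2⟩, hc0⟩ := exists_isRepr_of_mem_nfold hM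
  have hinj : Set.InjOn (k - ·) ↑A := fun _ _ _ _ h => sub_right_injective h
  rw [sum_image hinj] at hc1 hc2
  have hrepr : IsRepr A M ((M : ℤ) • k - (N • k - x)) fun y => c (k - y) := by
    refine ⟨hc1, ?_⟩
    rw [← hc2, ← hc1]
    simp [smul_sub, sum_sub_distrib, sum_smul]
  have hrepr' := hrepr.add (isRepr_single hk (N - M))
  have hx : (M : ℤ) • k - (N • k - x) + ((N : ℤ) - M) • k = x := by
    simp only [sub_smul, natCast_zsmul]
    abel
  rw [add_sub_cancel, hx] at hrepr'
  exact ⟨_, hrepr', fun y _ hy => by simp [hy, hc0]⟩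

theorem mem_excep_of_not_mem_PA {A : Finset (Fin d → ℤ)} {k x : Fin d → ℤ} {N : ℕ} (hN : 1 ≤ N)
    (hx : emb d x ∈ (N : ℝ) • hull d A) {c : (Fin d → ℤ) → ℤ} (hc : IsRepr A N x c)
    (hP : N • k - x ∉ PA d ↑(A.image (k - ·))) : N • k - x ∈ excep d (A.image (k - ·)) := by
  classical
  have hinj : Set.InjOn (k - ·) ↑A := fun _ _ _ _ h => sub_right_injective h
  obtain ⟨w, hw0, hw1, hwx⟩ := (mem_smul_hull_iff (by positivity)).1 hx
  refine ⟨⟨fun z => max (w (k - z)) 0, fun z => le_max_right _ _, ?_⟩, ?_, hP⟩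
  · have hw : ∀ y ∈ A, max (w y) 0 • emb d (k - y) = w y • emb d (k - y) :=
      fun y hy => by rw [max_eq_left (hw0 y hy)]
    rw [sum_image hinj]
    simp_rw [sub_sub_cancel]
    rw [sum_congr rfl hw, emb_sub, emb_nsmul]
    simp_rw [emb_sub, smul_sub]
    rw [sum_sub_distrib, ← sum_smul, hw1, hwx]
  · rw [← natCast_zsmul, ← hc.sum_smul_sub]
    exact sum_zsmul_mem_latt (fun y hy => mem_coe.2 (mem_image_of_mem _ hy)) c

theorem image_nfold_subset {A : Finset (Fin d → ℤ)} {a0 : Fin d → ℤ} (ha0 : a0 ∈ A) {N : ℕ}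
    (hN : 1 ≤ N) :
    emb d '' nfold d ↑A N ⊆
      ((N : ℝ) • hull d A ∩ emb d '' (({N • a0} : Set (Fin d → ℤ)) +
        (latt d ((A : Set (Fin d → ℤ)) - (A : Set (Fin d → ℤ))) : Set (Fin d → ℤ)))) \
      ⋃ a ∈ exP d A,
        emb d '' (({N • a} : Set (Fin d → ℤ)) - excep d (A.image fun y => a - y)) := by
  rintro _ ⟨x, hx, rfl⟩
  obtain ⟨c, hc, hc0⟩ := exists_isRepr_of_mem_nfold hx
  refine ⟨⟨(mem_smul_hull_iff (by positivity)).2 ⟨_, fun y _ => by exact_mod_cast hc0 y,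
    by exact_mod_cast hc.map_emb.1, hc.map_emb.2⟩, x, mem_coset_of_isRepr ha0 hc, rfl⟩, ?_⟩
  simp only [Set.mem_iUnion, not_exists]
  rintro a - ⟨_, ⟨_, rfl, u, hu, rfl⟩, hxu⟩
  obtain ⟨f, hf, rfl⟩ := hx
  refine hu.2.2 (Set.mem_biUnion hN ⟨fun i => a - f i, fun i => mem_image_of_mem _ (hf i), ?_⟩)
  have hu : N • a - u = ∑ i, f i := emb_injective hxu
  rw [sum_sub_distrib, ← hu]
  simp

end StructureSimplex

open StructureSimplex

/-- Effective structure theorem, simplex case with `|A| = d+1` or `|A| = d+2`: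
the structure equation holds for all `N ≥ 1`. -/
theorem structure_simplex_small (d : ℕ) (hd : 1 ≤ d)
    (A : Finset (Fin d → ℤ)) (hsimp : IsSimplex d A)
    (hcard : A.card = d + 1 ∨ A.card = d + 2)
    (a0 : Fin d → ℤ) (ha0 : a0 ∈ A) :
    ∀ N : ℕ, 1 ≤ N → structEq d A a0 N := by
  obtain ⟨B, hBA, hcardB, hspan, hhull⟩ := hsimp
  have hB := affineIndependent_emb hcardB hspan
  intro N hN
  refine (image_nfold_subset ha0 hN).antisymm ?_
  rintro _ ⟨⟨hξ, x, hx, rfl⟩, hnot⟩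
  obtain ⟨c, hc⟩ := exists_isRepr_of_mem_coset ha0 hx
  refine ⟨x, ?_, rfl⟩
  rcases hcard with hcard | hcard
  · obtain rfl : B = A := Finset.eq_of_subset_of_card_le hBA (by omega)
    exact mem_nfold_of_affineIndependent hB hN hξ hc
  classical
  obtain ⟨a, haB, rfl⟩ := Finset.exists_eq_insert_iff.2 ⟨hBA, by omega⟩
  have ha : emb d a ∈ hull d B :=
    hhull ▸ subset_convexHull ℝ _ ⟨a, Finset.mem_insert_self a B, rfl⟩
  obtain ⟨θ, hθ0, hθ1, hθ⟩ := mem_hull_iff.1 ha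
  have hvert (k) (hk : k ∈ B) :
      ∃ r, IsRepr (insert a B) N x r ∧ ∀ y ∈ insert a B, y ≠ k → 0 ≤ r y := by
    refine exists_isRepr_of_mem_PA (Finset.mem_insert_of_mem hk) (not_not.1 fun hP => hnot ?_)
    exact Set.mem_biUnion (mem_exP_of_mem_vertices hd hBA hcardB hspan hhull hk)
      ⟨x, ⟨N • k, rfl, _, mem_excep_of_not_mem_PA hN hξ hc hP, sub_sub_cancel _ _⟩, rfl⟩
  obtain ⟨c', hc', hc'0⟩ := exists_nonneg_isRepr_insert hB (by omega) haB hθ0 hθ1 hθ hvert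
  exact mem_nfold_of_isRepr hc' hc'0
end
end

section
/- Let B ∪ {0} ⊂ A ⊂ ℤ^d with A finite, and set B* = B ∪ {0}. Then P(A) = S(A,B) + P(B*), and for every positive integer N, NA = ⋃_{u ∈ S(A,B), N_A(u) ≤ N} (u + (N − N_A(u))·B*). -/
open Pointwise MeasureTheory

noncomputable section

lemma nfold_zero (d : ℕ) (A : Set (Fin d → ℤ)) : nfold d A 0 = {0} := by
  ext x
  constructor
  · rintro ⟨f, -, rfl⟩; simp
  · rintro rfl; exact ⟨fun i => i.elim0, fun i => i.elim0, by simp⟩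

lemma zero_mem_nfold {d : ℕ} {A : Set (Fin d → ℤ)} {N : ℕ} (h0 : (0 : Fin d → ℤ) ∈ A) :
    (0 : Fin d → ℤ) ∈ nfold d A N :=
  ⟨fun _ => 0, fun _ => h0, by simp⟩

lemma single_mem_nfold {d : ℕ} {A : Set (Fin d → ℤ)} {b : Fin d → ℤ} (hb : b ∈ A) :
    b ∈ nfold d A 1 :=
  ⟨fun _ => b, fun _ => hb, by simp⟩

lemma add_mem_nfold {d : ℕ} {A : Set (Fin d → ℤ)} {m n : ℕ} {x y : Fin d → ℤ}
    (hx : x ∈ nfold d A m) (hy : y ∈ nfold d A n) : x + y ∈ nfold d A (m + n) := by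
  obtain ⟨f, hf, rfl⟩ := hx
  obtain ⟨g, hg, rfl⟩ := hy
  refine ⟨Fin.append f g, fun i => ?_, ?_⟩
  · refine Fin.addCases (motive := fun i => Fin.append f g i ∈ A)
      (fun j => by simpa using hf j) (fun j => by simpa using hg j) i
  · rw [Fin.sum_univ_add]
    simp

lemma nfold_mono {d : ℕ} {A : Set (Fin d → ℤ)} (h0 : (0 : Fin d → ℤ) ∈ A) {m n : ℕ}
    (h : m ≤ n) : nfold d A m ⊆ nfold d A n := by
  intro x hx
  have := add_mem_nfold hx (zero_mem_nfold (N := n - m) h0)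
  rwa [add_zero, Nat.add_sub_cancel' h] at this

lemma nfold_subset {d : ℕ} {A B : Set (Fin d → ℤ)} (h : A ⊆ B) (N : ℕ) :
    nfold d A N ⊆ nfold d B N := by
  rintro x ⟨f, hf, rfl⟩; exact ⟨f, fun i => h (hf i), rfl⟩

lemma NAfn_zero {d : ℕ} (A : Set (Fin d → ℤ)) : NAfn d A 0 = 0 := by simp [NAfn]

lemma NAfn_le {d : ℕ} {A : Set (Fin d → ℤ)} {v : Fin d → ℤ} {N : ℕ} (hN : 0 < N)
    (hv : v ∈ nfold d A N) : NAfn d A v ≤ N := by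
  rcases eq_or_ne v 0 with rfl | h
  · simp [NAfn_zero]
  · rw [NAfn, if_neg h]; exact Nat.sInf_le ⟨hN, hv⟩

lemma NAfn_spec {d : ℕ} {A : Set (Fin d → ℤ)} {v : Fin d → ℤ} {N : ℕ} (hv0 : v ≠ 0)
    (hN : 0 < N) (hv : v ∈ nfold d A N) :
    0 < NAfn d A v ∧ v ∈ nfold d A (NAfn d A v) := by
  have h := Nat.sInf_mem (s := {N : ℕ | 0 < N ∧ v ∈ nfold d A N}) ⟨N, hN, hv⟩
  simpa [NAfn, hv0] using h

lemma mem_nfold_NAfn {d : ℕ} {A : Set (Fin d → ℤ)} {u : Fin d → ℤ}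
    (hu : u ∈ PA d A ∨ u = 0) : u ∈ nfold d A (NAfn d A u) := by
  rcases hu with hu | rfl
  · rcases eq_or_ne u 0 with rfl | h
    · rw [NAfn_zero, nfold_zero]; rfl
    · simp only [PA, Set.mem_iUnion, Set.mem_Ici] at hu
      obtain ⟨N, hN, hmem⟩ := hu
      exact (NAfn_spec h hN hmem).2
  · rw [NAfn_zero, nfold_zero]; rfl

lemma remove_mem_nfold {d : ℕ} {A : Set (Fin d → ℤ)} :
    ∀ {m : ℕ} (f : Fin m → (Fin d → ℤ)), (∀ i, f i ∈ A) → ∀ i : Fin m,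
      (∑ j, f j) - f i ∈ nfold d A (m - 1)
  | m + 1, f, hf, i => by
    refine ⟨fun j => f (i.succAbove j), fun j => hf _, ?_⟩
    rw [Fin.sum_univ_succAbove f i]
    abel

lemma key (d : ℕ) (A : Finset (Fin d → ℤ)) (B : Set (Fin d → ℤ))
    (hBA : B ∪ {0} ⊆ (A : Set (Fin d → ℤ))) :
    ∀ N : ℕ, ∀ x ∈ nfold d ↑A N, ∃ u ∈ Smin d ↑A B, NAfn d ↑A u ≤ N ∧
      x - u ∈ nfold d (B ∪ {0}) (N - NAfn d ↑A u) := by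
  have h0B : (0 : Fin d → ℤ) ∈ B ∪ ({0} : Set (Fin d → ℤ)) := Or.inr rfl
  have h0A : (0 : Fin d → ℤ) ∈ (A : Set (Fin d → ℤ)) := hBA h0B
  intro N
  induction N with
  | zero =>
    intro x hx
    rw [nfold_zero] at hx
    subst hx
    exact ⟨0, Or.inl rfl, by simp [NAfn_zero], by simpa [NAfn_zero] using zero_mem_nfold (N := 0) h0B⟩
  | succ N ih =>
    intro x hx
    rcases eq_or_ne x 0 with rfl | hx0
    · exact ⟨0, Or.inl rfl, by simp [NAfn_zero], by simpa [NAfn_zero] using zero_mem_nfold (N := N + 1) h0B⟩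
    have hmle : NAfn d ↑A x ≤ N + 1 := NAfn_le N.succ_pos hx
    obtain ⟨hmpos, hmmem⟩ := NAfn_spec hx0 N.succ_pos hx
    by_cases hS : x ∈ Smin d ↑A B
    · refine ⟨x, hS, hmle, ?_⟩
      simpa using zero_mem_nfold (N := N + 1 - NAfn d ↑A x) h0B
    · have hxPA : x ∈ PA d ↑A := by
        simp only [PA, Set.mem_iUnion, Set.mem_Ici]
        exact ⟨NAfn d ↑A x, hmpos, hmmem⟩
      have hnot : ¬ ∀ f : Fin (NAfn d ↑A x) → (Fin d → ℤ), (∀ i, f i ∈ (A : Set (Fin d → ℤ))) →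
          x = ∑ i, f i → ∀ i, f i ∉ B ∪ ({0} : Set (Fin d → ℤ)) := by
        intro h
        exact hS (Or.inr ⟨hxPA, hx0, h⟩)
      push_neg at hnot
      obtain ⟨f, hfA, hfx, i, hfi⟩ := hnot
      have hrem : x - f i ∈ nfold d ↑A (NAfn d ↑A x - 1) := by
        have h := remove_mem_nfold f hfA i
        rwa [← hfx] at h
      have hrem' : x - f i ∈ nfold d ↑A N :=
        nfold_mono h0A (by omega) hrem
      obtain ⟨u, hu, hule, hw⟩ := ih (x - f i) hrem'
      refine ⟨u, hu, hule.trans (Nat.le_succ N), ?_⟩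
      have heq : x - u = ((x - f i) - u) + f i := by abel
      rw [heq]
      have := add_mem_nfold hw (single_mem_nfold hfi)
      have hNu : N - NAfn d ↑A u + 1 = N + 1 - NAfn d ↑A u := by omega
      rwa [hNu] at this

lemma smin_or {d : ℕ} {A B : Set (Fin d → ℤ)} {u : Fin d → ℤ} (hu : u ∈ Smin d A B) :
    u ∈ PA d A ∨ u = 0 := by
  rcases hu with hu | hu
  · exact Or.inr hu
  · exact Or.inl hu.1

/-- Decomposition of `P(A)` and `NA` via `B`-minimal elements. -/
theorem B_minimal_decomposition (d : ℕ) (A : Finset (Fin d → ℤ)) (B : Set (Fin d → ℤ))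
    (hBA : B ∪ {0} ⊆ (A : Set (Fin d → ℤ))) :
    PA d ↑A = Smin d ↑A B + PA d (B ∪ {0}) ∧
    ∀ N : ℕ, 0 < N →
      nfold d ↑A N =
        ⋃ u ∈ {u ∈ Smin d ↑A B | NAfn d ↑A u ≤ N},
          ({u} : Set (Fin d → ℤ)) + nfold d (B ∪ {0}) (N - NAfn d ↑A u) := by
  have h0B : (0 : Fin d → ℤ) ∈ B ∪ ({0} : Set (Fin d → ℤ)) := Or.inr rfl
  have h0A : (0 : Fin d → ℤ) ∈ (A : Set (Fin d → ℤ)) := hBA h0B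
  constructor
  · ext x
    rw [Set.mem_add]
    constructor
    · intro hx
      simp only [PA, Set.mem_iUnion, Set.mem_Ici] at hx
      obtain ⟨N, hN1, hx⟩ := hx
      obtain ⟨u, hu, hule, hw⟩ := key d A B hBA N x hx
      refine ⟨u, hu, x - u, ?_, by ring⟩
      simp only [PA, Set.mem_iUnion, Set.mem_Ici]
      rcases Nat.eq_zero_or_pos (N - NAfn d ↑A u) with h | h
      · rw [h, nfold_zero] at hw
        rw [show x - u = 0 from hw]
        exact ⟨1, le_refl 1, zero_mem_nfold h0B⟩
      · exact ⟨N - NAfn d ↑A u, h, hw⟩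
    · rintro ⟨u, hu, w, hw, rfl⟩
      have hu' : u ∈ nfold d ↑A (NAfn d ↑A u) := mem_nfold_NAfn (smin_or hu)
      simp only [PA, Set.mem_iUnion, Set.mem_Ici] at hw ⊢
      obtain ⟨M, hM1, hwM⟩ := hw
      exact ⟨NAfn d ↑A u + M, by omega,
        add_mem_nfold hu' (nfold_subset hBA M hwM)⟩
  · intro N hN
    ext x
    simp only [Set.mem_iUnion, Set.mem_setOf_eq]
    constructor
    · intro hx
      obtain ⟨u, hu, hule, hw⟩ := key d A B hBA N x hx
      exact ⟨u, ⟨hu, hule⟩, Set.mem_add.mpr ⟨u, rfl, x - u, hw, by ring⟩⟩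
    · rintro ⟨u, ⟨huS, hule⟩, hx⟩
      obtain ⟨v, hv, w, hw, rfl⟩ := Set.mem_add.mp hx
      rw [Set.mem_singleton_iff] at hv
      subst hv
      have hu'' : v ∈ nfold d ↑A (NAfn d ↑A v) := mem_nfold_NAfn (smin_or huS)
      have := add_mem_nfold hu'' (nfold_subset hBA _ hw)
      rwa [Nat.add_sub_cancel' hule] at this
end
end

section
/- Let G be a finite abelian group and let H ⊂ G with 0 ∉ H. Suppose h_1, …, h_k ∈ H (repetitions allowed) are such that no nonempty subsum ∑_{i ∈ I} h_i (∅ ≠ I ⊆ {1,…,k}) equals 0, and no subsum ∑_{i ∈ I} h_i with |I| ≥ 2 belongs to H. Then k ≤ |G| − |H|. -/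
open Pointwise MeasureTheory

noncomputable section

/-- Davenport-type bound: a sum of elements of `H` with no vanishing nonempty subsum and no
subsum of length `≥ 2` in `H` has length at most `|G| - |H|`. -/
theorem davenport_type_bound (G : Type*) [AddCommGroup G] [Fintype G]
    (H : Finset G) (h0 : (0 : G) ∉ H)
    (k : ℕ) (h : Fin k → G) (hmem : ∀ i, h i ∈ H)
    (hzero : ∀ I : Finset (Fin k), I.Nonempty → ∑ i ∈ I, h i ≠ 0)
    (hlong : ∀ I : Finset (Fin k), 2 ≤ I.card → ∑ i ∈ I, h i ∉ H) :
    k ≤ Fintype.card G - H.card := by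
  classical
  set s : Fin k → G := fun j => ∑ i ∈ Finset.Iic j, h i with hs
  set f : Fin k → G := fun j => if j.val = 0 then 0 else s j with hf
  -- partial sums are nonzero
  have hsnz : ∀ j : Fin k, s j ≠ 0 := fun j =>
    hzero _ ⟨j, Finset.mem_Iic.mpr le_rfl⟩
  -- if j₁ ≤ j₂ and s j₁ = s j₂ then j₁ = j₂
  have key : ∀ j₁ j₂ : Fin k, j₁ ≤ j₂ → s j₁ = s j₂ → j₁ = j₂ := by
    intro j₁ j₂ hle heq
    by_contra hne
    have hlt : j₁ < j₂ := lt_of_le_of_ne hle hne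
    have hsub : Finset.Iic j₁ ⊆ Finset.Iic j₂ := Finset.Iic_subset_Iic.mpr hle
    have hsplit : ∑ i ∈ Finset.Iic j₂ \ Finset.Iic j₁, h i
        + ∑ i ∈ Finset.Iic j₁, h i = ∑ i ∈ Finset.Iic j₂, h i :=
      Finset.sum_sdiff hsub
    have hz : ∑ i ∈ Finset.Iic j₂ \ Finset.Iic j₁, h i = 0 := by
      have h1 : ∑ i ∈ Finset.Iic j₁, h i = ∑ i ∈ Finset.Iic j₂, h i := heq
      rw [h1] at hsplit
      exact add_right_cancel (by rw [hsplit, zero_add])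
    refine hzero _ ⟨j₂, ?_⟩ hz
    simp [Finset.mem_sdiff, not_le.mpr hlt]
  -- f maps into the complement of H
  have hmaps : ∀ j : Fin k, f j ∈ Hᶜ := by
    intro j
    rw [Finset.mem_compl]
    by_cases hj : j.val = 0
    · simpa [hf, hj] using h0
    · simp only [hf, if_neg hj]
      apply hlong
      have hb : ⟨0, j.pos⟩ ∈ Finset.Iic j := Finset.mem_Iic.mpr (Fin.mk_le_of_le_val (Nat.zero_le _))
      have hj' : j ∈ Finset.Iic j := Finset.mem_Iic.mpr le_rfl
      have : (⟨0, j.pos⟩ : Fin k) ≠ j := fun hEq => hj (by rw [← hEq])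
      exact Finset.one_lt_card.mpr ⟨_, hb, _, hj', this⟩
  -- f is injective
  have hinj : Function.Injective f := by
    intro j₁ j₂ hEq
    simp only [hf] at hEq
    by_cases h1 : j₁.val = 0 <;> by_cases h2 : j₂.val = 0
    · exact Fin.ext (h1.trans h2.symm)
    · rw [if_pos h1, if_neg h2] at hEq
      exact absurd hEq.symm (hsnz j₂)
    · rw [if_neg h1, if_pos h2] at hEq
      exact absurd hEq (hsnz j₁)
    · rw [if_neg h1, if_neg h2] at hEq
      rcases le_total j₁ j₂ with hle | hle
      · exact key _ _ hle hEq
      · exact (key _ _ hle hEq.symm).symm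
  -- conclude
  have hcard : (Finset.univ : Finset (Fin k)).card ≤ (Hᶜ : Finset G).card :=
    Finset.card_le_card_of_injOn f (fun j _ => hmaps j) hinj.injOn
  simpa [Finset.card_compl] using hcard
end
end

section
/- Let B = {b_1, …, b_d} ⊂ ℤ^d be a basis of ℝ^d, and let A ⊂ ℤ^d be finite with B ∪ {0} ⊆ A ⊆ H(B ∪ {0}). Let r ∈ P(A). If r ∈ Λ_B then r ∈ P(B ∪ {0}). If r ∉ Λ_B and a ∈ A satisfies r − a ∈ Λ_B, then r − a ∈ P(B ∪ {0}). -/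
open Pointwise MeasureTheory

noncomputable section

/-!
In the coordinates of the real basis `b`, points of `H(B ∪ {0})` have nonnegative coordinates
summing to at most `1`, so every element of `P(A)` has nonnegative coordinates, while points of
`Λ_B` have integer coordinates; a point of `Λ_B` with nonnegative coordinates lies in
`P(B ∪ {0})`. Each coordinate of `r - a` is at least `-1`, and equals `-1` only if the
corresponding coordinate of `a` is `1`, which forces `a = b i` and hence `r ∈ Λ_B`.
-/

namespace Module.Basis

variable {ι E : Type*} [Fintype ι] [AddCommGroup E] [Module ℝ E] (B : Basis ι ℝ E)

def cornerSimplex : Set E := {x | (∀ i, 0 ≤ B.equivFun x i) ∧ ∑ i, B.equivFun x i ≤ 1}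

lemma convex_cornerSimplex : Convex ℝ B.cornerSimplex := by
  have hsum : IsLinearMap ℝ fun x => ∑ i, B.equivFun x i :=
    ⟨fun x y => by simp [Finset.sum_add_distrib], fun c x => by simp [Finset.mul_sum]⟩
  refine Convex.inter (s := {x | ∀ i, 0 ≤ B.equivFun x i}) ?_ (convex_halfSpace_le hsum 1)
  rw [Set.ofPred_forall]
  exact convex_iInter fun i => convex_halfSpace_ge (B.coord i).isLinear 0

lemma convexHull_subset_cornerSimplex :
    convexHull ℝ (Set.range B ∪ {0}) ⊆ B.cornerSimplex := by
  classical
  refine convexHull_min ?_ B.convex_cornerSimplex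
  rintro _ (⟨i, rfl⟩ | rfl)
  · refine ⟨fun j => ?_, ?_⟩ <;> simp
    split_ifs <;> norm_num
  · simp [cornerSimplex]

lemma eq_of_mem_cornerSimplex {x : E} (hx : x ∈ B.cornerSimplex) {i : ι}
    (hi : 1 ≤ B.equivFun x i) : x = B i := by
  classical
  obtain ⟨hnn, hsum⟩ := hx
  apply B.equivFun.injective
  ext j
  rw [B.equivFun_self]
  rcases eq_or_ne j i with rfl | hji
  · have := Finset.single_le_sum (fun k _ => hnn k) (Finset.mem_univ j)
    rw [if_pos rfl]
    linarith
  · have := Finset.sum_le_sum_of_subset_of_nonneg (Finset.subset_univ {i, j})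
      (fun k _ _ => hnn k)
    rw [Finset.sum_pair (Ne.symm hji)] at this
    rw [if_neg (Ne.symm hji)]
    exact le_antisymm (by linarith) (hnn j)

end Module.Basis

section

variable {d : ℕ}

lemma emb_zero : emb d 0 = 0 := by
  funext i; simp [emb]

lemma emb_sub (x y : Fin d → ℤ) : emb d (x - y) = emb d x - emb d y := by
  funext i; simp [emb]

lemma emb_zsmul (m : ℤ) (x : Fin d → ℤ) : emb d (m • x) = (m : ℝ) • emb d x := by
  funext i; simp [emb]

lemma emb_sum {ι : Type*} (s : Finset ι) (f : ι → Fin d → ℤ) :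
    emb d (∑ i ∈ s, f i) = ∑ i ∈ s, emb d (f i) := by
  funext j; simp [emb, Finset.sum_apply]

lemma emb_injective : Function.Injective (emb d) := fun x y h =>
  funext fun i => by simpa [emb] using congrFun h i

lemma mem_PA_iff {S : Set (Fin d → ℤ)} {x : Fin d → ℤ} :
    x ∈ PA d S ↔
      ∃ N, 1 ≤ N ∧ ∃ f : Fin N → Fin d → ℤ, (∀ i, f i ∈ S) ∧ x = ∑ i, f i := by
  simp [PA, nfold]

lemma mem_PA_of_mem {S : Set (Fin d → ℤ)} {x : Fin d → ℤ} (hx : x ∈ S) : x ∈ PA d S :=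
  Set.mem_biUnion (Set.mem_Ici.2 le_rfl) ⟨fun _ => x, fun _ => hx, by simp⟩

lemma add_mem_PA {S : Set (Fin d → ℤ)} {x y : Fin d → ℤ} (hx : x ∈ PA d S)
    (hy : y ∈ PA d S) : x + y ∈ PA d S := by
  obtain ⟨N, hN, f, hf, rfl⟩ := mem_PA_iff.1 hx
  obtain ⟨M, -, g, hg, rfl⟩ := mem_PA_iff.1 hy
  refine Set.mem_biUnion (Set.mem_Ici.2 (by omega : 1 ≤ N + M)) ⟨Fin.append f g, ?_, ?_⟩
  · exact Fin.addCases (fun i => by simpa using hf i) (fun i => by simpa using hg i)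
  · rw [Fin.sum_univ_add]
    simp

lemma PA_eq_closure {S : Set (Fin d → ℤ)} (h0 : 0 ∈ S) : PA d S = AddSubmonoid.closure S := by
  ext x
  constructor
  · intro hx
    obtain ⟨N, -, f, hf, rfl⟩ := mem_PA_iff.1 hx
    exact AddSubmonoid.sum_mem _ fun i _ => AddSubmonoid.subset_closure (hf i)
  · intro hx
    induction hx using AddSubmonoid.closure_induction with
    | mem x hx => exact mem_PA_of_mem hx
    | zero => exact mem_PA_of_mem h0
    | add x y _ _ hx hy => exact add_mem_PA hx hy

variable {b : Fin d → Fin d → ℤ} (hb : LinearIndependent ℝ fun i => emb d (b i))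

def embBasis : Module.Basis (Fin d) ℝ (Fin d → ℝ) :=
  basisOfLinearIndependentOfCardEqFinrank' _ hb (by simp)

@[simp]
lemma coe_embBasis : ⇑(embBasis hb) = fun i => emb d (b i) := by
  simp [embBasis]

lemma image_emb_range_union_zero :
    emb d '' (Set.range b ∪ {0}) = Set.range (embBasis hb) ∪ {0} := by
  rw [Set.image_union, Set.image_singleton, emb_zero, ← Set.range_comp, coe_embBasis]
  rfl

lemma embBasis_equivFun_emb_sum_zsmul (m : Fin d → ℤ) :
    (embBasis hb).equivFun (emb d (∑ i, m i • b i)) = fun i => (m i : ℝ) := by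
  have : emb d (∑ i, m i • b i) = (embBasis hb).equivFun.symm fun i => (m i : ℝ) := by
    rw [emb_sum, Module.Basis.equivFun_symm_apply]
    exact Finset.sum_congr rfl fun i _ => by rw [emb_zsmul, coe_embBasis]
  rw [this, LinearEquiv.apply_symm_apply]

lemma embBasis_equivFun_nonneg_of_mem_PA {A : Set (Fin d → ℤ)}
    (hA : ∀ a ∈ A, ∀ i, 0 ≤ (embBasis hb).equivFun (emb d a) i) {r : Fin d → ℤ}
    (hr : r ∈ PA d A) (i : Fin d) : 0 ≤ (embBasis hb).equivFun (emb d r) i := by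
  obtain ⟨N, -, f, hf, rfl⟩ := mem_PA_iff.1 hr
  rw [emb_sum, map_sum, Finset.sum_apply]
  exact Finset.sum_nonneg fun j _ => hA _ (hf j) i

/-- `-1 <` suffices because the coordinates of a point of `Λ_B` are integers. -/
lemma mem_PA_of_mem_latt {x : Fin d → ℤ} (hx : x ∈ latt d (Set.range b))
    (hgt : ∀ i, -1 < (embBasis hb).equivFun (emb d x) i) : x ∈ PA d (Set.range b ∪ {0}) := by
  obtain ⟨m, rfl⟩ := AddSubgroup.exists_of_mem_closure_range b x hx
  have hm : ∀ i, 0 ≤ m i := fun i => by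
    have : (-1 : ℝ) < m i := by simpa only [embBasis_equivFun_emb_sum_zsmul] using hgt i
    have : (-1 : ℤ) < m i := by exact_mod_cast this
    omega
  rw [PA_eq_closure (Or.inr rfl)]
  refine AddSubmonoid.sum_mem _ fun i _ => ?_
  rw [← Int.toNat_of_nonneg (hm i), natCast_zsmul]
  exact AddSubmonoid.nsmul_mem _
    (AddSubmonoid.subset_closure (Set.mem_union_left _ (Set.mem_range_self i))) _

end

theorem simplex_basic_davenport_general (d : ℕ) (b : Fin d → (Fin d → ℤ))
    (hb : LinearIndependent ℝ (fun i => emb d (b i)))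
    (A : Finset (Fin d → ℤ))
    (hAH : emb d '' (A : Set (Fin d → ℤ)) ⊆ convexHull ℝ (emb d '' (Set.range b ∪ {0})))
    (r : Fin d → ℤ) (hr : r ∈ PA d ↑A) :
    ((r : Fin d → ℤ) ∈ latt d (Set.range b) → r ∈ PA d (Set.range b ∪ {0})) ∧
    (∀ a ∈ A, r ∉ latt d (Set.range b) → r - a ∈ latt d (Set.range b) →
      r - a ∈ PA d (Set.range b ∪ {0})) := by
  set B := embBasis hb
  have hA : ∀ a ∈ A, emb d a ∈ B.cornerSimplex := fun a ha =>
    B.convexHull_subset_cornerSimplex <| by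
      rw [← image_emb_range_union_zero hb]; exact hAH ⟨a, ha, rfl⟩
  have hr0 := embBasis_equivFun_nonneg_of_mem_PA hb (fun a ha => (hA a ha).1) hr
  refine ⟨fun hrΛ => mem_PA_of_mem_latt hb hrΛ fun i => by linarith [hr0 i],
    fun a ha hrΛ hraΛ => mem_PA_of_mem_latt hb hraΛ fun i => ?_⟩
  have ha_not_vertex : a ∉ Set.range b := by
    rintro ⟨j, rfl⟩
    exact hrΛ (by simpa using add_mem hraΛ (AddSubgroup.subset_closure ⟨j, rfl⟩))
  have hai : B.equivFun (emb d a) i < 1 := lt_of_not_ge fun h =>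
    ha_not_vertex
      ⟨i, emb_injective (by simpa [B] using (B.eq_of_mem_cornerSimplex (hA a ha) h).symm)⟩
  rw [emb_sub, map_sub, Pi.sub_apply]
  linarith [hr0 i]

/-- If `r ∈ P(A)` is congruent to `a ∈ A ∪ {0}` modulo `Λ_B` then `r - a ∈ P(B ∪ {0})`. -/
theorem simplex_basic_davenport (d : ℕ) (b : Fin d → (Fin d → ℤ))
    (hb : LinearIndependent ℝ (fun i => emb d (b i)))
    (A : Finset (Fin d → ℤ))
    (hBA : Set.range b ∪ {0} ⊆ (A : Set (Fin d → ℤ)))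
    (hAH : emb d '' (A : Set (Fin d → ℤ)) ⊆ convexHull ℝ (emb d '' (Set.range b ∪ {0})))
    (r : Fin d → ℤ) (hr : r ∈ PA d ↑A) :
    ((r : Fin d → ℤ) ∈ latt d (Set.range b) → r ∈ PA d (Set.range b ∪ {0})) ∧
    (∀ a ∈ A, r ∉ latt d (Set.range b) → r - a ∈ latt d (Set.range b) →
      r - a ∈ PA d (Set.range b ∪ {0})) :=
  simplex_basic_davenport_general d b hb A hAH r hr
end
end

section
/- Let M be a nonzero m-by-n matrix with integer entries and n > m, and let K be the maximum of the absolute values of the entries of M. Then there exists X ∈ ℤ^n ∖ {0} with M X = 0 and ‖X‖_∞ ≤ (K n)^m. -/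
open Pointwise MeasureTheory

noncomputable section

attribute [local instance] Matrix.seminormedAddCommGroup

/-- Pigeonhole Siegel-type lemma: a nonzero integer kernel vector of a wide integer matrix
with `‖X‖_∞ ≤ (Kn)^m`. -/
theorem small_kernel_vector (m n : ℕ) (hmn : m < n)
    (M : Matrix (Fin m) (Fin n) ℤ) (hM : M ≠ 0)
    (K : ℕ) (hK : ∀ i j, (M i j).natAbs ≤ K) :
    ∃ X : Fin n → ℤ, X ≠ 0 ∧ M.mulVec X = 0 ∧ ∀ j, (X j).natAbs ≤ (K * n) ^ m := by
  classical
  rcases Nat.eq_zero_or_pos m with hm | hm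
  · exfalso; apply hM; subst hm; ext i j; exact i.elim0
  · have h := Int.Matrix.exists_ne_zero_int_vec_norm_le' M
      (by simpa using hmn) (by simpa using hm) hM
    simp only [Fintype.card_fin] at h
    obtain ⟨t, ht0, htM, htn⟩ := h
    refine ⟨t, ht0, htM, fun j => ?_⟩
    have hn0 : 0 < n := lt_of_le_of_lt (Nat.zero_le m) hmn
    have hK1 : 1 ≤ K := by
      by_contra hc
      push_neg at hc
      interval_cases K
      apply hM
      ext i j
      simpa [Int.natAbs_eq_zero] using Nat.le_zero.mp (hK i j)
    have hMK : ‖M‖ ≤ (K : ℝ) := by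
      rw [Matrix.norm_le_iff (by positivity)]
      intro i j
      rw [Int.norm_eq_abs, ← Int.cast_abs, Int.abs_eq_natAbs]
      exact_mod_cast hK i j
    have he0 : (0:ℝ) ≤ (m : ℝ) / ((n:ℝ) - m) := by
      apply div_nonneg (Nat.cast_nonneg m)
      have : (m:ℝ) ≤ n := Nat.cast_le.mpr hmn.le
      linarith
    have hem : (m : ℝ) / ((n:ℝ) - m) ≤ (m : ℝ) := by
      have h1 : (1:ℝ) ≤ (n:ℝ) - m := by
        have : (m:ℝ) + 1 ≤ n := by exact_mod_cast hmn
        linarith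
      calc (m : ℝ) / ((n:ℝ) - m) ≤ (m:ℝ) / 1 :=
            div_le_div_of_nonneg_left (Nat.cast_nonneg m) one_pos h1
        _ = m := div_one _
    have hbase1 : (1:ℝ) ≤ (n:ℝ) * K := by
      have h1 : (1:ℝ) ≤ (n:ℝ) := by exact_mod_cast hn0
      have h2 : (1:ℝ) ≤ (K:ℝ) := by exact_mod_cast hK1
      nlinarith
    have key : ((t j).natAbs : ℝ) ≤ ((K * n) ^ m : ℕ) := by
      have h1 : ‖t j‖ ≤ ‖t‖ := norm_le_pi_norm t j
      have h2 : ((n:ℝ) * ‖M‖) ^ ((m : ℝ) / ((n:ℝ) - m)) ≤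
          ((n:ℝ) * K) ^ ((m : ℝ) / ((n:ℝ) - m)) := by
        apply Real.rpow_le_rpow (by positivity) _ he0
        exact mul_le_mul_of_nonneg_left hMK (Nat.cast_nonneg n)
      have h3 : ((n:ℝ) * K) ^ ((m : ℝ) / ((n:ℝ) - m)) ≤ ((n:ℝ) * K) ^ (m:ℝ) :=
        Real.rpow_le_rpow_of_exponent_le hbase1 hem
      have h4 : ((n:ℝ) * K) ^ (m:ℝ) = (((K * n) ^ m : ℕ) : ℝ) := by
        rw [Real.rpow_natCast]
        push_cast
        ring
      have h5 : ((t j).natAbs : ℝ) = ‖t j‖ := by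
        simp [Int.norm_eq_abs, Nat.cast_natAbs]
      rw [h5, ← h4]
      exact h1.trans (htn.trans (h2.trans h3))
    exact_mod_cast key
end
end

section
/- Let M be an m-by-n integer matrix with m ≤ n and rank M = m, and let b ∈ ℤ^m. Suppose all entries of M are at most K_1 in absolute value and ‖b‖_∞ ≤ K_2, where K_1, K_2 ≥ 1. If there exists x ∈ ℤ_{>0}^n with M x = b, then there exists y ∈ ℤ_{>0}^n with M y = b and ‖y‖_∞ ≤ (n−m)(n^m m^m K_1^{2m} + m^m K_1^m) + m^m K_1^{m−1} K_2. -/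
open Pointwise MeasureTheory

noncomputable section

/-!
Put `G = m! K₁^m`. If the columns of `M` at which a positive solution `x` exceeds `G` are linearly
dependent, Cramer's rule on a maximal independent subfamily and a nonsingular minor of it gives an
integer relation `w` among these columns with `|w j| ≤ G`. Subtracting from `x` the largest
multiple of `w` that keeps it positive brings one of these coordinates down to at most `G` and
leaves the others untouched. Iterating, we reach a positive solution `y` whose large
coordinates index independent columns; Cramer's rule on a nonsingular minor of those columns
bounds them by `m! (K₂ + n K₁ G) K₁^(m-1)`. When `m = n`, full rank makes `M` invertible and
Cramer's rule bounds `x` itself.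
-/

open Finset Module Matrix
open scoped Nat

theorem Function.extend_subtype_val_apply_of_not {α β : Type*} [Zero β] {p : α → Prop}
    (z : Subtype p → β) {a : α} (ha : ¬ p a) : Function.extend Subtype.val z 0 a = 0 :=
  Function.extend_apply' _ _ _ fun ⟨k, hk⟩ => ha (hk ▸ k.2)

namespace Matrix

variable {m ι R : Type*} [Fintype ι]

section

variable [DecidableEq ι]

theorem det_le_prod {S : Type*} [CommRing R] [Nontrivial R] [CommRing S] [LinearOrder S]
    [IsStrictOrderedRing S] {A : Matrix ι ι R} {abv : AbsoluteValue R S} {c : ι → S}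
    (hc : ∀ i j, abv (A i j) ≤ c j) : abv A.det ≤ (Fintype.card ι)! • ∏ j, c j :=
  calc
    abv A.det = abv (∑ σ : Equiv.Perm ι, Equiv.Perm.sign σ • ∏ j, A (σ j) j) :=
      congr_arg abv (det_apply _)
    _ ≤ ∑ σ : Equiv.Perm ι, abv (Equiv.Perm.sign σ • ∏ j, A (σ j) j) := abv.sum_le _ _
    _ = ∑ σ : Equiv.Perm ι, ∏ j, abv (A (σ j) j) :=
      sum_congr rfl fun σ _ => by rw [abv.map_units_int_smul, abv.map_prod]
    _ ≤ ∑ _σ : Equiv.Perm ι, ∏ j, c j := by gcongr with σ _ j; exact hc _ _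
    _ = (Fintype.card ι)! • ∏ j, c j := by simp [Fintype.card_perm]

theorem cramer_mulVec [CommRing R] (A : Matrix ι ι R) (z : ι → R) :
    A.cramer (A *ᵥ z) = A.det • z := by
  rw [cramer_eq_adjugate_mulVec, mulVec_mulVec, adjugate_mul, smul_mulVec, one_mulVec]

theorem abs_le_of_abs_mulVec_le {A : Matrix ι ι ℤ} (hA : A.det ≠ 0) {K C : ℤ}
    (hK : ∀ i j, |A i j| ≤ K) {z : ι → ℤ} (hC : ∀ i, |(A *ᵥ z) i| ≤ C) (j : ι) :
    |z j| ≤ (Fintype.card ι)! * (C * K ^ (Fintype.card ι - 1)) := by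
  have hcol : ∀ i l, |A.updateCol j (A *ᵥ z) i l| ≤ Function.update (fun _ => K) j C l := by
    intro i l
    rcases eq_or_ne l j with rfl | hl
    · simpa using hC i
    · simpa [hl] using hK i l
  calc |z j| ≤ |A.det| * |z j| := le_mul_of_one_le_left (abs_nonneg _) (Int.one_le_abs hA)
    _ = |(A.updateCol j (A *ᵥ z)).det| := by
      rw [← abs_mul, ← cramer_apply, cramer_mulVec, Pi.smul_apply, smul_eq_mul]
    _ ≤ (Fintype.card ι)! • ∏ l, Function.update (fun _ => K) j C l :=
      det_le_prod (abv := AbsoluteValue.abs) hcol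
    _ = (Fintype.card ι)! * (C * K ^ (Fintype.card ι - 1)) := by
      rw [prod_update_of_mem (mem_univ j), prod_const, nsmul_eq_mul,
        card_sdiff_of_subset (subset_univ _)]
      simp

theorem det_ne_zero_of_rank_eq_card [CommRing R] [IsDomain R] {A : Matrix ι ι R}
    (h : A.rank = Fintype.card ι) : A.det ≠ 0 := by
  rw [Ne, ← exists_mulVec_eq_zero_iff]
  rintro ⟨v, hv, hAv⟩
  have hker := Submodule.disjoint_ker_of_finrank_le (L := ⊤) A.mulVecLin (by
    rw [Submodule.map_top, ← rank, h, finrank_top, finrank_fintype_fun_eq_card])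
  exact hv (hker.eq_bot.le ⟨Submodule.mem_top, hAv⟩)

theorem exists_submatrix_det_ne_zero_of_field {K : Type*} [Field K] [Fintype m]
    (B : Matrix m ι K) (hB : LinearIndependent K B.col) :
    ∃ r : ι → m, (B.submatrix r id).det ≠ 0 := by
  obtain ⟨κ, a, ha, hspan, hli⟩ := exists_linearIndependent' K B.row
  have : Finite κ := Finite.of_injective a ha
  have : Fintype κ := Fintype.ofFinite κ
  have hcard : Fintype.card ι = Fintype.card κ := by
    rw [← finrank_span_eq_card hB, ← finrank_span_eq_card hli, hspan, ← rank_eq_finrank_span_row,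
      rank_eq_finrank_span_cols]
  obtain e := Fintype.equivOfCardEq hcard
  refine ⟨a ∘ e, ?_⟩
  rw [← isUnit_iff_ne_zero, ← isUnit_iff_isUnit_det, ← linearIndependent_rows_iff_isUnit]
  exact hli.comp e e.injective

theorem exists_submatrix_det_ne_zero [CommRing R] [IsDomain R] [Fintype m] (B : Matrix m ι R)
    (hB : LinearIndependent R B.col) : ∃ r : ι → m, (B.submatrix r id).det ≠ 0 := by
  let K := FractionRing R
  have hinj : Function.Injective (LinearMap.compLeft (Algebra.linearMap R K) m) :=
    fun x y h => funext fun i => IsFractionRing.injective R K (congrFun h i)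
  have hK : LinearIndependent K (B.map (algebraMap R K)).col := by
    rw [← LinearIndependent.iff_fractionRing R K]
    exact hB.map' _ (LinearMap.ker_eq_bot.mpr hinj)
  obtain ⟨r, hr⟩ := exists_submatrix_det_ne_zero_of_field _ hK
  refine ⟨r, fun h => hr ?_⟩
  rw [submatrix_map, ← RingHom.mapMatrix_apply, ← RingHom.map_det, h, map_zero]

theorem mulVec_cramer_submatrix_of_smul_mem_span [CommRing R] [IsDomain R] (B : Matrix m ι R)
    (r : ι → m) {v : m → R} {a : R} (ha : a ≠ 0)
    (hv : a • v ∈ Submodule.span R (Set.range B.col)) :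
    B *ᵥ (B.submatrix r id).cramer (v ∘ r) = (B.submatrix r id).det • v := by
  obtain ⟨q, hq⟩ : ∃ q, B *ᵥ q = a • v := by
    rwa [← range_mulVecLin, LinearMap.mem_range] at hv
  have hAq : B.submatrix r id *ᵥ q = a • (v ∘ r) := funext fun i => congrFun hq (r i)
  apply smul_right_injective (m → R) ha
  calc a • (B *ᵥ (B.submatrix r id).cramer (v ∘ r))
      = B *ᵥ (B.submatrix r id).cramer (a • (v ∘ r)) := by rw [map_smul, mulVec_smul]
    _ = B *ᵥ ((B.submatrix r id).det • q) := by rw [← hAq, cramer_mulVec]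
    _ = a • (B.submatrix r id).det • v := by rw [mulVec_smul, hq, smul_comm]

end

theorem mulVec_extend_subtype_val [NonUnitalNonAssocSemiring R] {n : Type*} [Fintype n]
    (B : Matrix m n R) {p : n → Prop} [DecidablePred p] (z : Subtype p → R) :
    B *ᵥ Function.extend Subtype.val z 0 = B.submatrix id Subtype.val *ᵥ z := by
  ext i
  simp only [mulVec, dotProduct, submatrix_apply, id]
  rw [← Fintype.sum_subtype_add_sum_subtype p]
  simp [fun j : {j // ¬ p j} => Function.extend_subtype_val_apply_of_not z j.2]

theorem exists_ne_zero_mulVec_eq_zero_abs_le [Fintype m] (B : Matrix m ι ℤ) {K : ℤ} (hK : 1 ≤ K)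
    (hB : ∀ i j, |B i j| ≤ K) (hdep : ¬ LinearIndependent ℤ B.col) :
    ∃ u ≠ 0, B *ᵥ u = 0 ∧ ∀ j, |u j| ≤ (Fintype.card m)! * K ^ Fintype.card m := by
  classical
  obtain ⟨T, hT, hmax⟩ := exists_maximal_linearIndepOn ℤ B.col
  obtain ⟨j₀, hj₀⟩ : ∃ j₀, j₀ ∉ T := by
    by_contra! h
    exact hdep (linearIndepOn_univ_iff.mp (Set.eq_univ_of_forall h ▸ hT))
  obtain ⟨a, ha, hspan⟩ := hmax j₀ hj₀
  rw [Set.image_eq_range] at hspan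
  set C := B.submatrix id (Subtype.val : T → ι)
  obtain ⟨r, hr⟩ := exists_submatrix_det_ne_zero C hT
  set A := C.submatrix r id
  have hdet_le : ∀ D : Matrix T T ℤ, (∀ i j, |D i j| ≤ K) →
      |D.det| ≤ (Fintype.card m)! * K ^ Fintype.card m := by
    intro D hD
    have hcard : Fintype.card T ≤ Fintype.card m := by simpa using hT.fintype_card_le_finrank
    refine (det_le (abv := AbsoluteValue.abs) hD).trans ?_
    simp only [nsmul_eq_mul]
    gcongr
  refine ⟨Function.extend Subtype.val (A.cramer (B.col j₀ ∘ r)) 0 - Pi.single j₀ A.det,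
    fun h => hr ?_, ?_, fun j => ?_⟩
  · simpa [Function.extend_subtype_val_apply_of_not _ hj₀] using congrFun h j₀
  · rw [mulVec_sub, mulVec_extend_subtype_val,
      mulVec_cramer_submatrix_of_smul_mem_span C r ha hspan, mulVec_single, op_smul_eq_smul,
      sub_self]
  by_cases hj : j ∈ T
  · lift j to T using hj
    have hne : (j : ι) ≠ j₀ := fun h => hj₀ (h ▸ j.2)
    rw [Pi.sub_apply, Subtype.val_injective.extend_apply, Pi.single_eq_of_ne hne, sub_zero,
      cramer_apply]
    refine hdet_le _ fun i l => ?_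
    rcases eq_or_ne l j with rfl | hl
    · simpa using hB _ _
    · simpa [hl, A, C] using hB _ _
  · rw [Pi.sub_apply, Function.extend_subtype_val_apply_of_not _ hj, zero_sub, abs_neg]
    rcases eq_or_ne j j₀ with rfl | hne
    · simpa using hdet_le A fun _ _ => hB _ _
    · simp only [Pi.single_eq_of_ne hne, abs_zero]
      positivity

theorem exists_mulVec_eq_zero_pos_of_not_linearIndepOn {n : Type*} [Fintype m] [Fintype n]
    (M : Matrix m n ℤ) {K : ℤ} (hK : 1 ≤ K) (hM : ∀ i j, |M i j| ≤ K)
    {L : Set n} (hdep : ¬ LinearIndepOn ℤ M.col L) :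
    ∃ w, M *ᵥ w = 0 ∧ (∀ j ∉ L, w j = 0) ∧
      (∀ j, |w j| ≤ (Fintype.card m)! * K ^ Fintype.card m) ∧ ∃ j, 0 < w j := by
  classical
  obtain ⟨u, hu0, hMu, hu⟩ := exists_ne_zero_mulVec_eq_zero_abs_le
    (M.submatrix id (Subtype.val : L → n)) hK (fun _ _ => hM _ _) hdep
  set v : n → ℤ := Function.extend Subtype.val u 0
  have hMv : M *ᵥ v = 0 := by rw [mulVec_extend_subtype_val, hMu]
  have hvL : ∀ j ∉ L, v j = 0 := fun j hj => Function.extend_subtype_val_apply_of_not u hj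
  have hv : ∀ j, |v j| ≤ (Fintype.card m)! * K ^ Fintype.card m := by
    intro j
    by_cases hj : j ∈ L
    · lift j to L using hj
      simpa [v, Subtype.val_injective.extend_apply] using hu j
    · rw [hvL j hj, abs_zero]
      positivity
  obtain ⟨j₀, hj₀⟩ := Function.ne_iff.mp hu0
  rcases lt_or_gt_of_ne hj₀ with hneg | hpos
  · refine ⟨-v, by rw [mulVec_neg, hMv, neg_zero], fun j hj => by simp [hvL j hj],
      fun j => by simpa using hv j, j₀, ?_⟩
    simpa [v, Subtype.val_injective.extend_apply] using hneg
  · refine ⟨v, hMv, hvL, hv, j₀, ?_⟩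
    simpa [v, Subtype.val_injective.extend_apply] using hpos

end Matrix

theorem exists_pos_sub_mul_le {n : Type*} [Fintype n] {x w : n → ℤ} (hx : ∀ j, 0 < x j)
    (hw : ∃ j, 0 < w j) :
    ∃ t : ℤ, (∀ j, 0 < x j - t * w j) ∧ ∃ j, 0 < w j ∧ x j - t * w j ≤ w j := by
  classical
  obtain ⟨j₁, hj₁, hmin⟩ := (univ.filter fun j => 0 < w j).exists_min_image
    (fun j => (x j - 1) / w j) (by simpa [Finset.Nonempty] using hw)
  have hwj₁ : 0 < w j₁ := (mem_filter.mp hj₁).2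
  refine ⟨(x j₁ - 1) / w j₁, fun j => ?_, j₁, hwj₁, ?_⟩
  · rcases lt_or_ge 0 (w j) with hwj | hwj
    · have := (Int.le_ediv_iff_mul_le hwj).mp (hmin j (by simp [hwj]))
      linarith
    · have ht : 0 ≤ (x j₁ - 1) / w j₁ := Int.ediv_nonneg (by linarith [hx j₁]) hwj₁.le
      nlinarith [hx j]
  · nlinarith [Int.lt_ediv_add_one_mul_self (x j₁ - 1) hwj₁]

theorem exists_pos_mulVec_eq_linearIndepOn {m n : Type*} [Fintype m] [Fintype n]
    (M : Matrix m n ℤ) {K : ℤ} (hK : 1 ≤ K) (hM : ∀ i j, |M i j| ≤ K) {x : n → ℤ}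
    (hx : ∀ j, 0 < x j) :
    ∃ y, (∀ j, 0 < y j) ∧ M *ᵥ y = M *ᵥ x ∧
      LinearIndepOn ℤ M.col {j | (Fintype.card m)! * K ^ Fintype.card m < y j} := by
  classical
  set G : ℤ := (Fintype.card m)! * K ^ Fintype.card m
  induction hN : (univ.filter fun j => G < x j).card using Nat.strong_induction_on
    generalizing x with
  | _ N ih =>
  by_cases hli : LinearIndepOn ℤ M.col {j | G < x j}
  · exact ⟨x, hx, rfl, hli⟩
  obtain ⟨w, hMw, hwL, hwG, hw⟩ := exists_mulVec_eq_zero_pos_of_not_linearIndepOn M hK hM hli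
  obtain ⟨t, hpos, j₁, hwj₁, hj₁⟩ := exists_pos_sub_mul_le hx hw
  have hsub : (univ.filter fun j => G < x j - t * w j) ⊂ univ.filter fun j => G < x j := by
    refine Finset.ssubset_iff_of_subset (fun j => ?_) |>.mpr ⟨j₁, ?_, ?_⟩
    · simp only [mem_filter, mem_univ, true_and]
      intro hj
      by_contra h
      rw [hwL j h] at hj
      simp_all
    · simpa using by_contra fun h => hwj₁.ne' (hwL j₁ h)
    · simp only [mem_filter, mem_univ, true_and, not_lt]
      exact hj₁.trans (le_abs_self _ |>.trans (hwG j₁))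
  obtain ⟨y, hy, hMy, hyli⟩ := ih _ (hN ▸ card_lt_card hsub) hpos rfl
  refine ⟨y, hy, ?_, hyli⟩
  rw [hMy, show (fun j => x j - t * w j) = x - t • w from rfl, mulVec_sub, mulVec_smul, hMw,
    smul_zero, sub_zero]

theorem abs_le_of_linearIndepOn {m n : Type*} [Fintype m] [Fintype n] (M : Matrix m n ℤ)
    {K C G : ℤ} (hK : 1 ≤ K) (hG : 0 ≤ G) (hM : ∀ i j, |M i j| ≤ K) {y : n → ℤ}
    (hy : ∀ j, 0 < y j) (hC : ∀ i, |(M *ᵥ y) i| ≤ C)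
    (hli : LinearIndepOn ℤ M.col {j | G < y j}) {j : n} (hj : G < y j) :
    |y j| ≤ (Fintype.card m)! * ((C + Fintype.card n * K * G) * K ^ (Fintype.card m - 1)) := by
  classical
  set L := {j | G < y j}
  obtain ⟨r, hr⟩ := exists_submatrix_det_ne_zero (M.submatrix id (Subtype.val : L → n)) hli
  have hcard : Fintype.card L ≤ Fintype.card m := by simpa using hli.fintype_card_le_finrank
  have hsplit : ∀ i, (M.submatrix r (Subtype.val : L → n) *ᵥ (y ∘ Subtype.val)) i =
      (M *ᵥ y) (r i) - ∑ l : {l // l ∉ L}, M (r i) l * y l := fun i => by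
    rw [eq_sub_iff_add_eq]
    exact Fintype.sum_subtype_add_sum_subtype (· ∈ L) fun l => M (r i) l * y l
  have hsmall : ∀ i, |∑ l : {l // l ∉ L}, M (r i) l * y l| ≤ Fintype.card n * K * G := by
    intro i
    calc |∑ l : {l // l ∉ L}, M (r i) l * y l| ≤ ∑ l : {l // l ∉ L}, K * G := by
          refine (abs_sum_le_sum_abs _ _).trans (sum_le_sum fun l _ => ?_)
          rw [abs_mul, abs_of_pos (hy l)]
          exact mul_le_mul (hM _ _) (not_lt.mp l.2) (hy l).le (by linarith)
      _ ≤ Fintype.card n * K * G := by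
          rw [sum_const, card_univ, nsmul_eq_mul, mul_assoc]
          gcongr
          exact_mod_cast Fintype.card_subtype_le _
  have hc : ∀ i, |(M.submatrix r (Subtype.val : L → n) *ᵥ (y ∘ Subtype.val)) i| ≤
      C + Fintype.card n * K * G := fun i => by
    rw [hsplit]
    exact (abs_sub _ _).trans (add_le_add (hC _) (hsmall i))
  calc |y j| ≤ (Fintype.card L)! * ((C + Fintype.card n * K * G) * K ^ (Fintype.card L - 1)) :=
        abs_le_of_abs_mulVec_le hr (fun _ _ => hM _ _) hc ⟨j, hj⟩
    _ ≤ _ := by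
        have := (abs_nonneg _).trans (hc ⟨j, hj⟩)
        gcongr

theorem Nat.factorial_le_pow_pred : ∀ n : ℕ, n ! ≤ n ^ (n - 1)
  | 0 => le_rfl
  | 1 => le_rfl
  | n + 2 =>
    calc (n + 2)! = (n + 2) * (n + 1)! := Nat.factorial_succ _
      _ ≤ (n + 2) * (n + 1) ^ n := Nat.mul_le_mul_left _ (factorial_le_pow_pred (n + 1))
      _ ≤ (n + 2) * (n + 2) ^ n := by gcongr; omega
      _ = (n + 2) ^ (n + 2 - 1) := by rw [show n + 2 - 1 = n + 1 by omega, pow_succ']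

def solutionBound (m n K₁ K₂ : ℕ) : ℕ :=
  (n - m) * (n ^ m * m ^ m * K₁ ^ (2 * m) + m ^ m * K₁ ^ m) + m ^ m * K₁ ^ (m - 1) * K₂

theorem factorial_mul_le_solutionBound_self (m K₁ K₂ : ℕ) :
    m ! * (K₂ * K₁ ^ (m - 1)) ≤ solutionBound m m K₁ K₂ := by
  rw [solutionBound, Nat.sub_self, zero_mul, zero_add, mul_comm K₂, ← mul_assoc]
  gcongr
  exact Nat.factorial_le_pow m

theorem factorial_mul_pow_le_solutionBound {m n : ℕ} (hmn : m < n) (K₁ K₂ : ℕ) :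
    m ! * K₁ ^ m ≤ solutionBound m n K₁ K₂ :=
  calc m ! * K₁ ^ m ≤ m ^ m * K₁ ^ m := by gcongr; exact Nat.factorial_le_pow m
    _ ≤ (n - m) * (n ^ m * m ^ m * K₁ ^ (2 * m) + m ^ m * K₁ ^ m) :=
      (Nat.le_add_left _ _).trans (Nat.le_mul_of_pos_left _ (by omega))
    _ ≤ solutionBound m n K₁ K₂ := Nat.le_add_right _ _

theorem factorial_mul_add_le_solutionBound {m n : ℕ} (hm : 0 < m) (hmn : m < n) (K₁ K₂ : ℕ) :
    m ! * ((K₂ + n * K₁ * (m ! * K₁ ^ m)) * K₁ ^ (m - 1)) ≤ solutionBound m n K₁ K₂ := by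
  obtain ⟨k, rfl⟩ : ∃ k, m = k + 1 := ⟨m - 1, by omega⟩
  have hn : n * (k + 1)! ≤ n ^ (k + 1) :=
    calc n * (k + 1)! ≤ n * n ^ k := by
          gcongr
          exact (Nat.factorial_le_pow_pred _).trans (Nat.pow_le_pow_left (by omega) _)
      _ = n ^ (k + 1) := (pow_succ' _ _).symm
  calc (k + 1)! * ((K₂ + n * K₁ * ((k + 1)! * K₁ ^ (k + 1))) * K₁ ^ (k + 1 - 1))
      = (n * (k + 1)!) * (k + 1)! * K₁ ^ (2 * (k + 1)) + (k + 1)! * K₁ ^ (k + 1 - 1) * K₂ := by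
        simp only [Nat.add_sub_cancel]; ring
    _ ≤ n ^ (k + 1) * (k + 1) ^ (k + 1) * K₁ ^ (2 * (k + 1))
          + (k + 1) ^ (k + 1) * K₁ ^ (k + 1 - 1) * K₂ := by
        gcongr <;> exact Nat.factorial_le_pow _
    _ ≤ solutionBound (k + 1) n K₁ K₂ := by
        refine Nat.add_le_add_right ?_ _
        exact (Nat.le_add_right _ _).trans (Nat.le_mul_of_pos_left _ (by omega))

theorem exists_pos_mulVec_eq_abs_le_solutionBound {m n : ℕ} (hmn : m < n)
    (M : Matrix (Fin m) (Fin n) ℤ) {K₁ K₂ : ℕ} (hK₁ : 1 ≤ K₁) (hM : ∀ i j, |M i j| ≤ K₁)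
    {x : Fin n → ℤ} (hx : ∀ j, 0 < x j) (hb : ∀ i, |(M *ᵥ x) i| ≤ K₂) :
    ∃ y, (∀ j, 0 < y j) ∧ M *ᵥ y = M *ᵥ x ∧ ∀ j, |y j| ≤ solutionBound m n K₁ K₂ := by
  have hK₁' : (1 : ℤ) ≤ K₁ := by exact_mod_cast hK₁
  obtain ⟨y, hy, hMy, hli⟩ := exists_pos_mulVec_eq_linearIndepOn M hK₁' hM hx
  refine ⟨y, hy, hMy, fun j => ?_⟩
  by_cases hj : ((Fintype.card (Fin m))! : ℤ) * K₁ ^ Fintype.card (Fin m) < y j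
  · have hm : 0 < m := Nat.pos_of_ne_zero fun h => by
      subst h
      exact hli.ne_zero hj (Subsingleton.elim _ _)
    refine (abs_le_of_linearIndepOn M hK₁' (by positivity) hM hy (hMy ▸ hb) hli hj).trans ?_
    simpa using (Nat.cast_le (α := ℤ)).mpr (factorial_mul_add_le_solutionBound hm hmn K₁ K₂)
  · rw [abs_of_pos (hy j)]
    refine (not_lt.mp hj).trans ?_
    simpa using (Nat.cast_le (α := ℤ)).mpr (factorial_mul_pow_le_solutionBound hmn K₁ K₂)

theorem positive_solution_full_rank_general (m n : ℕ) (hmn : m ≤ n)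
    (M : Matrix (Fin m) (Fin n) ℤ) (hrank : M.rank = m)
    (b : Fin m → ℤ) (K1 K2 : ℕ) (hK1 : 1 ≤ K1)
    (hM : ∀ i j, (M i j).natAbs ≤ K1) (hb : ∀ i, (b i).natAbs ≤ K2)
    (x : Fin n → ℤ) (hx : ∀ j, 0 < x j) (hMx : M.mulVec x = b) :
    ∃ y : Fin n → ℤ, (∀ j, 0 < y j) ∧ M.mulVec y = b ∧
      ∀ j, (y j).natAbs ≤
        (n - m) * (n ^ m * m ^ m * K1 ^ (2 * m) + m ^ m * K1 ^ m)
          + m ^ m * K1 ^ (m - 1) * K2 := by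
  have hM' : ∀ i j, |M i j| ≤ K1 := fun i j => by rw [Int.abs_eq_natAbs]; exact_mod_cast hM i j
  have hb' : ∀ i, |b i| ≤ K2 := fun i => by rw [Int.abs_eq_natAbs]; exact_mod_cast hb i
  suffices ∃ y : Fin n → ℤ, (∀ j, 0 < y j) ∧ M *ᵥ y = b ∧
      ∀ j, |y j| ≤ solutionBound m n K1 K2 by
    obtain ⟨y, hy, hMy, hbound⟩ := this
    refine ⟨y, hy, hMy, fun j => ?_⟩
    have := hbound j
    rw [Int.abs_eq_natAbs] at this
    exact_mod_cast this
  rcases hmn.lt_or_eq with hlt | rfl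
  · obtain ⟨y, hy, hMy, hbound⟩ :=
      exists_pos_mulVec_eq_abs_le_solutionBound hlt M hK1 hM' hx (hMx ▸ hb')
    exact ⟨y, hy, hMy.trans hMx, hbound⟩
  · have hdet : M.det ≠ 0 := det_ne_zero_of_rank_eq_card (by simpa using hrank)
    refine ⟨x, hx, hMx, fun j => (abs_le_of_abs_mulVec_le hdet hM' (hMx ▸ hb') j).trans ?_⟩
    simpa using (Nat.cast_le (α := ℤ)).mpr (factorial_mul_le_solutionBound_self m K1 K2)

/-- A positive integer solution of `My = b` with controlled size, full-rank case. -/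
theorem positive_solution_full_rank (m n : ℕ) (hmn : m ≤ n)
    (M : Matrix (Fin m) (Fin n) ℤ) (hrank : M.rank = m)
    (b : Fin m → ℤ) (K1 K2 : ℕ) (hK1 : 1 ≤ K1) (hK2 : 1 ≤ K2)
    (hM : ∀ i j, (M i j).natAbs ≤ K1) (hb : ∀ i, (b i).natAbs ≤ K2)
    (x : Fin n → ℤ) (hx : ∀ j, 0 < x j) (hMx : M.mulVec x = b) :
    ∃ y : Fin n → ℤ, (∀ j, 0 < y j) ∧ M.mulVec y = b ∧
      ∀ j, (y j).natAbs ≤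
        (n - m) * (n ^ m * m ^ m * K1 ^ (2 * m) + m ^ m * K1 ^ m)
          + m ^ m * K1 ^ (m - 1) * K2 :=
  positive_solution_full_rank_general m n hmn M hrank b K1 K2 hK1 hM hb x hx hMx
end
end
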